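/- arXiv:2402.04795 — 3 statements merged into one kernel-verified Lean document; each statement's English description precedes it below -/
import Mathlib

section
/- Let ‖·‖ be an arbitrary norm on ℝ^d, let h > 0, and let x : [0,h] → ℝ^d be a twice continuously differentiable curve. Then for every τ ∈ [0,h], the distance, measured in the norm ‖·‖, from the point x(τ) to the line segment joining x(0) and x(h) is at most (h²/8)·max_{t∈[0,h]} ‖ẍ(t)‖. -/
/-- `N` is a norm on `ℝ^d`: subadditive, absolutely homogeneous, and definite. -/
def IsNorm {d : ℕ} (N : (Fin d → ℝ) → ℝ) : Prop :=
  (∀ x y, N (x + y) ≤ N x + N y) ∧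
  (∀ (c : ℝ) (x), N (c • x) = |c| * N x) ∧
  (∀ x, N x = 0 → x = 0)

/-!
Expand `x` to first order about `τ`. The mean value inequality, compared against a quadratic,
bounds the remainders at `0` and at `h` by `M τ² / 2` and `M (h - τ)² / 2`, where `M` bounds `‖ẍ‖`.
Averaging the two expansions with the weights `1 - τ / h` and `τ / h` that represent `τ` as a
point of `[0, h]` cancels the first-order terms, so the point of the segment with these weights
lies within `M τ (h - τ) / 2 ≤ M h² / 8` of `x τ`. All of this happens in an arbitrary normed
space, and `N` turns `ℝ^d` into one.
-/

open Set

section Taylor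

variable {E : Type*} [NormedAddCommGroup E] [NormedSpace ℝ E]

theorem norm_sub_le_of_norm_deriv_le_deriv {g g' : ℝ → E} {B B' : ℝ → ℝ} {a b : ℝ} (hab : a ≤ b)
    (hg : ∀ t ∈ Icc a b, HasDerivWithinAt g (g' t) (Icc a b) t)
    (hB : ∀ t, HasDerivAt B (B' t) t) (bound : ∀ t ∈ Icc a b, ‖g' t‖ ≤ B' t) :
    ‖g b - g a‖ ≤ B b - B a :=
  image_norm_le_of_norm_deriv_right_le_deriv_boundary (f := fun t => g t - g a)
    (B := fun t => B t - B a)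
    (fun t ht => ((hg t ht).sub_const (g a)).continuousWithinAt)
    (fun t ht => ((hg t (Ico_subset_Icc_self ht)).sub_const (g a)).mono_of_mem_nhdsWithin
      (Icc_mem_nhdsGE_of_mem ht))
    (by simp) (fun t => (hB t).sub_const (B a)) (fun t ht => bound t (Ico_subset_Icc_self ht))
    (right_mem_Icc.2 hab)

theorem norm_taylor_remainder_le {S : Set ℝ} (hS : S.OrdConnected) {x x' x'' : ℝ → E}
    {M s c : ℝ} (hx' : ∀ t ∈ S, HasDerivWithinAt x (x' t) S t)
    (hx'' : ∀ t ∈ S, HasDerivWithinAt x' (x'' t) S t) (hM : ∀ t ∈ S, ‖x'' t‖ ≤ M)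
    (hs : s ∈ S) (hc : c ∈ S) :
    ‖x c - x s - (c - s) • x' s‖ ≤ M * (c - s) ^ 2 / 2 := by
  -- `g c - g s` is the remainder, and `g` has derivative `(c - t) • x'' t`
  set g : ℝ → E := fun t => x t + (c - t) • x' t
  have hg : ∀ t ∈ S, HasDerivWithinAt g ((c - t) • x'' t) S t := by
    intro t ht
    exact ((hx' t ht).add (((hasDerivWithinAt_id t S).const_sub c).smul (hx'' t ht))).congr_deriv
      (by simp only [id]; module)
  have hg' : ∀ {u v}, u ∈ S → v ∈ S →
      ∀ t ∈ Icc u v, HasDerivWithinAt g ((c - t) • x'' t) (Icc u v) t :=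
    fun hu hv t ht => (hg t (hS.out hu hv ht)).mono (hS.out hu hv)
  have hbound : ∀ t ∈ S, ‖(c - t) • x'' t‖ ≤ |c - t| * M := fun t ht => by
    rw [norm_smul, Real.norm_eq_abs]
    exact mul_le_mul_of_nonneg_left (hM t ht) (abs_nonneg _)
  have hrem : x c - x s - (c - s) • x' s = g c - g s := by simp [g]; abel
  rcases le_total s c with hsc | hcs
  · have := norm_sub_le_of_norm_deriv_le_deriv hsc (hg' hs hc)
      (B := fun t => -(M / 2 * (c - t) ^ 2)) (B' := fun t => M * (c - t))
      (fun t => ((((hasDerivAt_id t).const_sub c).pow 2).const_mul (M / 2)).neg.congr_deriv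
        (by simp only [id]; ring))
      (fun t ht => by
        have := hbound t (hS.out hs hc ht)
        rwa [abs_of_nonneg (sub_nonneg.2 ht.2), mul_comm] at this)
    rw [hrem]; linarith
  · have := norm_sub_le_of_norm_deriv_le_deriv hcs (hg' hc hs)
      (B := fun t => M / 2 * (t - c) ^ 2) (B' := fun t => M * (t - c))
      (fun t => ((((hasDerivAt_id t).sub_const c).pow 2).const_mul (M / 2)).congr_deriv
        (by simp only [id]; ring))
      (fun t ht => by
        have := hbound t (hS.out hc hs ht)
        rwa [abs_of_nonpos (sub_nonpos.2 ht.1), neg_sub, mul_comm] at this)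
    rw [hrem, norm_sub_rev]
    convert this using 1
    ring

theorem norm_sub_lineMap_le_of_norm_deriv_deriv_le {x x' x'' : ℝ → E} {M a b τ : ℝ} (hab : a < b)
    (hx' : ∀ t ∈ Icc a b, HasDerivWithinAt x (x' t) (Icc a b) t)
    (hx'' : ∀ t ∈ Icc a b, HasDerivWithinAt x' (x'' t) (Icc a b) t)
    (hM : ∀ t ∈ Icc a b, ‖x'' t‖ ≤ M) (hτ : τ ∈ Icc a b) :
    ‖x τ - AffineMap.lineMap (x a) (x b) ((τ - a) / (b - a))‖ ≤ M * (τ - a) * (b - τ) / 2 := by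
  set θ := (τ - a) / (b - a)
  have hθ : θ * (b - a) = τ - a := div_mul_cancel₀ _ (sub_ne_zero.2 hab.ne')
  have hθ₀ : 0 ≤ θ := div_nonneg (sub_nonneg.2 hτ.1) (sub_nonneg.2 hab.le)
  have hθ₁ : 0 ≤ 1 - θ := by
    rw [sub_nonneg]; exact div_le_one_of_le₀ (by linarith [hτ.2]) (sub_nonneg.2 hab.le)
  clear_value θ
  have hRa := norm_taylor_remainder_le ordConnected_Icc hx' hx'' hM hτ (left_mem_Icc.2 hab.le)
  have hRb := norm_taylor_remainder_le ordConnected_Icc hx' hx'' hM hτ (right_mem_Icc.2 hab.le)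
  -- the first-order terms cancel because `(1 - θ) • a + θ • b = τ`
  have hsplit : x τ - AffineMap.lineMap (x a) (x b) θ =
      -((1 - θ) • (x a - x τ - (a - τ) • x' τ) + θ • (x b - x τ - (b - τ) • x' τ)) := by
    rw [AffineMap.lineMap_apply_module]
    linear_combination (norm := module) -(hθ • x' τ)
  rw [hsplit, norm_neg]
  calc _ ≤ (1 - θ) * (M * (a - τ) ^ 2 / 2) + θ * (M * (b - τ) ^ 2 / 2) := by
        refine norm_add_le_of_le ?_ ?_
        · rw [norm_smul_of_nonneg hθ₁]; exact mul_le_mul_of_nonneg_left hRa hθ₁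
        · rw [norm_smul_of_nonneg hθ₀]; exact mul_le_mul_of_nonneg_left hRb hθ₀
    _ = M * (τ - a) * (b - τ) / 2 := by
        rw [show τ = a + θ * (b - a) by linarith]; ring

end Taylor

/-- A copy of `Fin d → ℝ` on which `N`, rather than the sup norm, can be installed as the norm. -/
def WithNorm {d : ℕ} (_N : (Fin d → ℝ) → ℝ) : Type := Fin d → ℝ

namespace WithNorm

variable {d : ℕ} (N : (Fin d → ℝ) → ℝ)

instance : AddCommGroup (WithNorm N) := inferInstanceAs (AddCommGroup (Fin d → ℝ))

noncomputable instance : Module ℝ (WithNorm N) := inferInstanceAs (Module ℝ (Fin d → ℝ))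

instance : Norm (WithNorm N) := ⟨N⟩

end WithNorm

namespace IsNorm

variable {d : ℕ} {N : (Fin d → ℝ) → ℝ}

theorem map_zero (hN : IsNorm N) : N 0 = 0 := by
  simpa using hN.2.1 0 0

theorem nonneg (hN : IsNorm N) (v : Fin d → ℝ) : 0 ≤ N v := by
  have hneg : N (-v) = N v := by simpa using hN.2.1 (-1) v
  have := hN.1 v (-v)
  rw [add_neg_cancel, hN.map_zero, hneg] at this
  linarith

theorem normedSpaceCore (hN : IsNorm N) : NormedSpace.Core ℝ (WithNorm N) where
  norm_nonneg := hN.nonneg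
  norm_smul c v := by rw [Real.norm_eq_abs]; exact hN.2.1 c v
  norm_triangle := hN.1
  norm_eq_zero_iff v := ⟨hN.2.2 v, fun hv => hv ▸ hN.map_zero⟩

theorem exists_continuousLinearMap_norm_eq (hN : IsNorm N) :
    ∃ (E : Type) (_ : NormedAddCommGroup E) (_ : NormedSpace ℝ E) (e : (Fin d → ℝ) →L[ℝ] E),
      ∀ v, ‖e v‖ = N v := by
  let _ := NormedAddCommGroup.ofCore hN.normedSpaceCore
  let _ := NormedSpace.ofCore hN.normedSpaceCore
  exact ⟨WithNorm N, _, _,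
    LinearMap.toContinuousLinearMap (LinearMap.id : (Fin d → ℝ) →ₗ[ℝ] WithNorm N), fun _ => rfl⟩

end IsNorm

/-- **Lemma 1.** Let `‖·‖` be an arbitrary norm on `ℝ^d` and `x : [0,h] → ℝ^d` a twice
continuously differentiable curve. Then for every `τ ∈ [0,h]`, the distance (in the norm `N`)
from the point `x τ` to the segment joining `x 0` and `x h` is at most
`(h²/8) · max_{t ∈ [0,h]} N (ẍ t)`. -/
theorem dist_to_segment_le {d : ℕ} (N : (Fin d → ℝ) → ℝ) (hN : IsNorm N)
    (h : ℝ) (hh : 0 < h) (x x' x'' : ℝ → (Fin d → ℝ))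
    (hx' : ∀ t ∈ Set.Icc (0 : ℝ) h, HasDerivWithinAt x (x' t) (Set.Icc (0 : ℝ) h) t)
    (hx'' : ∀ t ∈ Set.Icc (0 : ℝ) h, HasDerivWithinAt x' (x'' t) (Set.Icc (0 : ℝ) h) t)
    (hcont : ContinuousOn x'' (Set.Icc (0 : ℝ) h)) :
    ∀ τ ∈ Set.Icc (0 : ℝ) h,
      sInf {r : ℝ | ∃ y ∈ segment ℝ (x 0) (x h), r = N (x τ - y)} ≤
        h ^ 2 / 8 * sSup {r : ℝ | ∃ t ∈ Set.Icc (0 : ℝ) h, r = N (x'' t)} := by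
  intro τ hτ
  obtain ⟨E, _, _, e, he⟩ := hN.exists_continuousLinearMap_norm_eq
  set M := sSup {r : ℝ | ∃ t ∈ Icc (0 : ℝ) h, r = N (x'' t)}
  have hbdd : BddAbove {r : ℝ | ∃ t ∈ Icc (0 : ℝ) h, r = N (x'' t)} := by
    obtain ⟨C, hC⟩ := isCompact_Icc.bddAbove_image
      ((continuous_norm.comp e.continuous).comp_continuousOn hcont)
    refine ⟨C, ?_⟩
    rintro _ ⟨t, ht, rfl⟩
    exact he (x'' t) ▸ hC ⟨t, ht, rfl⟩
  have hM : ∀ t ∈ Icc (0 : ℝ) h, ‖e (x'' t)‖ ≤ M := fun t ht => he _ ▸ le_csSup hbdd ⟨t, ht, rfl⟩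
  have hM₀ : 0 ≤ M := (norm_nonneg _).trans (hM 0 (left_mem_Icc.2 hh.le))
  have key := norm_sub_lineMap_le_of_norm_deriv_deriv_le (x := e ∘ x) hh
    (fun t ht => e.hasFDerivAt.comp_hasDerivWithinAt t (hx' t ht))
    (fun t ht => e.hasFDerivAt.comp_hasDerivWithinAt t (hx'' t ht)) hM hτ
  have hlin := e.toLinearMap.toAffineMap.apply_lineMap (x 0) (x h) (τ / h)
  simp only [LinearMap.coe_toAffineMap, ContinuousLinearMap.coe_coe] at hlin
  simp only [Function.comp_apply, sub_zero, ← hlin, ← map_sub, he] at key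
  have hθ : τ / h ∈ Icc (0 : ℝ) 1 := ⟨div_nonneg hτ.1 hh.le, div_le_one_of_le₀ hτ.2 hh.le⟩
  refine (csInf_le ?_ ?_).trans (key.trans ?_)
  · exact ⟨0, by rintro _ ⟨y, -, rfl⟩; exact hN.nonneg _⟩
  · exact ⟨_, lineMap_mem_segment ℝ (x 0) (x h) hθ, rfl⟩
  · nlinarith [mul_nonneg hM₀ (sq_nonneg (h - 2 * τ))]
end

section
/- Let ‖·‖ be an arbitrary norm on ℝ^d, let A be a d×d real matrix, and let h be a real number with 0 < h and h²·‖A²‖ < 8. Let x(t) = e^{tA} x₀ for some x₀ ∈ ℝ^d (so x solves ẋ = Ax). Then for every τ ∈ [0,h], ‖x(τ)‖ ≤ (1 − (h²/8)‖A²‖)^{−1} · max{‖x(0)‖, ‖x(h)‖}. -/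
/-- The operator norm of the matrix `M`, induced by the norm `N` on `ℝ^d`:
`sup { N (M x) : N x ≤ 1 }`. -/
noncomputable def opNorm {d : ℕ} (N : (Fin d → ℝ) → ℝ) (M : Matrix (Fin d) (Fin d) ℝ) : ℝ :=
  sSup {r : ℝ | ∃ x, N x ≤ 1 ∧ r = N (M.mulVec x)}

/-! Let `s ∈ [0, h]` maximise `‖x‖`, and let `φ` be a norming functional of `x τ`. The scalar
function `f = φ ∘ x` satisfies `f'' ≥ -‖A²‖ ‖x s‖` on `[0, h]`, so adding the parabola
`‖A²‖ ‖x s‖ t (t - h) / 2` makes it convex, whence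
`f τ ≤ max (f 0) (f h) + ‖A²‖ ‖x s‖ τ (h - τ) / 2`. At `τ = s` this reads
`‖x s‖ ≤ max ‖x 0‖ ‖x h‖ + (h² / 8) ‖A²‖ ‖x s‖`, which rearranges to the bound. -/

open Set Matrix NormedSpace

theorem le_max_add_of_hasDerivAt_of_neg_le_deriv2 {f f' f'' : ℝ → ℝ} {a b K : ℝ}
    (hf : ∀ t, HasDerivAt f (f' t) t) (hf' : ∀ t, HasDerivAt f' (f'' t) t)
    (hK : ∀ t ∈ Icc a b, -K ≤ f'' t) {τ : ℝ} (hτ : τ ∈ Icc a b) :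
    f τ ≤ max (f a) (f b) + (τ - a) * (b - τ) / 2 * K := by
  have hab : a ≤ b := hτ.1.trans hτ.2
  -- `g'' = f'' + K ≥ 0`, and `g` agrees with `f` at both endpoints.
  set g : ℝ → ℝ := fun t => f t + K * ((t - a) * (t - b)) / 2
  have hg (t : ℝ) : HasDerivAt g (f' t + K * (2 * t - a - b) / 2) t :=
    ((hf t).add ((((hasDerivAt_id' t).sub_const a).mul
      ((hasDerivAt_id' t).sub_const b)).const_mul K |>.div_const 2)).congr_deriv (by ring)
  have hg' (t : ℝ) : HasDerivAt (fun t => f' t + K * (2 * t - a - b) / 2) (f'' t + K) t :=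
    ((hf' t).add (((((hasDerivAt_id' t).const_mul 2).sub_const a).sub_const b).const_mul K
      |>.div_const 2)).congr_deriv (by ring)
  have hconv : ConvexOn ℝ (Icc a b) g :=
    convexOn_of_hasDerivWithinAt2_nonneg (convex_Icc a b)
      (fun t _ => (hg t).continuousAt.continuousWithinAt) (fun t _ => (hg t).hasDerivWithinAt)
      (fun t _ => (hg' t).hasDerivWithinAt)
      (fun t ht => by linarith [hK t (interior_subset ht)])
  have hg_le := hconv.le_on_segment (left_mem_Icc.2 hab) (right_mem_Icc.2 hab)
    (by rwa [segment_eq_Icc hab])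
  simp only [g, sub_self, zero_mul, mul_zero, zero_div, add_zero] at hg_le
  linarith

section NormedSpace

variable {E : Type*} [NormedAddCommGroup E] [NormedSpace ℝ E] {u u' u'' : ℝ → E} {a b : ℝ}

theorem norm_le_max_add_of_norm_deriv2_le {K : ℝ} (hu : ∀ t, HasDerivAt u (u' t) t)
    (hu' : ∀ t, HasDerivAt u' (u'' t) t) (hK : ∀ t ∈ Icc a b, ‖u'' t‖ ≤ K) {τ : ℝ}
    (hτ : τ ∈ Icc a b) : ‖u τ‖ ≤ max ‖u a‖ ‖u b‖ + (τ - a) * (b - τ) / 2 * K := by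
  obtain ⟨φ, hφ, hφτ⟩ := exists_dual_vector'' ℝ (u τ)
  have hφle (v : E) : |φ v| ≤ ‖v‖ := by
    simpa using φ.le_opNorm v |>.trans (mul_le_of_le_one_left (norm_nonneg v) hφ)
  have key := le_max_add_of_hasDerivAt_of_neg_le_deriv2 (f := fun t => φ (u t))
    (fun t => φ.hasFDerivAt.comp_hasDerivAt t (hu t))
    (fun t => φ.hasFDerivAt.comp_hasDerivAt t (hu' t))
    (fun t ht => neg_le_of_abs_le ((hφle _).trans (hK t ht))) hτ
  rw [hφτ] at key
  refine key.trans (add_le_add_left (max_le_max ?_ ?_) _)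
  exacts [le_of_abs_le (hφle _), le_of_abs_le (hφle _)]

theorem norm_le_inv_mul_max_of_norm_deriv2_le_mul {L : ℝ} (hu : ∀ t, HasDerivAt u (u' t) t)
    (hu' : ∀ t, HasDerivAt u' (u'' t) t) (hL₀ : 0 ≤ L) (hL : (b - a) ^ 2 * L < 8)
    (hu'' : ∀ t ∈ Icc a b, ‖u'' t‖ ≤ L * ‖u t‖) {τ : ℝ} (hτ : τ ∈ Icc a b) :
    ‖u τ‖ ≤ (1 - (b - a) ^ 2 / 8 * L)⁻¹ * max ‖u a‖ ‖u b‖ := by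
  have hu_cont : Continuous u := continuous_iff_continuousAt.2 fun t => (hu t).continuousAt
  obtain ⟨s, hs, hmax⟩ := isCompact_Icc.exists_isMaxOn ⟨τ, hτ⟩ hu_cont.norm.continuousOn
  have hmax : ∀ t ∈ Icc a b, ‖u t‖ ≤ ‖u s‖ := hmax
  have hK : ∀ t ∈ Icc a b, ‖u'' t‖ ≤ L * ‖u s‖ := fun t ht =>
    (hu'' t ht).trans (mul_le_mul_of_nonneg_left (hmax t ht) hL₀)
  have hs_le : ‖u s‖ ≤ max ‖u a‖ ‖u b‖ + (b - a) ^ 2 / 8 * (L * ‖u s‖) := by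
    refine (norm_le_max_add_of_norm_deriv2_le hu hu' hK hs).trans ?_
    have : (s - a) * (b - s) / 2 ≤ (b - a) ^ 2 / 8 := by nlinarith [sq_nonneg (a + b - 2 * s)]
    gcongr
  calc ‖u τ‖ ≤ ‖u s‖ := hmax τ hτ
    _ ≤ (1 - (b - a) ^ 2 / 8 * L)⁻¹ * max ‖u a‖ ‖u b‖ := by
      rw [le_inv_mul_iff₀ (by linarith)]
      linarith

end NormedSpace

theorem Matrix.hasDerivAt_exp_smul_mulVec {n : Type*} [Fintype n] [DecidableEq n]
    (A : Matrix n n ℝ) (v : n → ℝ) (t : ℝ) :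
    HasDerivAt (fun s : ℝ => exp (s • A) *ᵥ v) (A *ᵥ (exp (t • A) *ᵥ v)) t := by
  -- Any normed-algebra structure on matrices will do; `exp` does not depend on it.
  let _ := Matrix.linftyOpNormedRing (n := n) (α := ℝ)
  let _ := Matrix.linftyOpNormedAlgebra (n := n) (R := ℝ) (α := ℝ)
  rw [mulVec_mulVec]
  exact (LinearMap.toContinuousLinearMap ((mulVecBilin ℝ ℝ).flip v)).hasFDerivAt.comp_hasDerivAt t
    (hasDerivAt_exp_smul_const' A t)

section

variable {d : ℕ} {N : (Fin d → ℝ) → ℝ}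

theorem IsNorm.map_zero_s1 (hN : IsNorm N) : N 0 = 0 := by
  simpa using hN.2.1 0 0

theorem IsNorm.map_neg (hN : IsNorm N) (x : Fin d → ℝ) : N (-x) = N x := by
  simpa using hN.2.1 (-1) x

/-- A copy of `Fin d → ℝ` whose norm is `N` rather than the sup norm. -/
def NormedBy (_N : (Fin d → ℝ) → ℝ) : Type := Fin d → ℝ

namespace NormedBy

instance : AddCommGroup (NormedBy N) := inferInstanceAs (AddCommGroup (Fin d → ℝ))

instance : Module ℝ (NormedBy N) := inferInstanceAs (Module ℝ (Fin d → ℝ))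

instance : FiniteDimensional ℝ (NormedBy N) := inferInstanceAs (FiniteDimensional ℝ (Fin d → ℝ))

variable [hN : Fact (IsNorm N)]

noncomputable instance : NormedAddCommGroup (NormedBy N) :=
  AddGroupNorm.toNormedAddCommGroup
    { toFun := N
      map_zero' := hN.out.map_zero_s1
      add_le' := hN.out.1
      neg' := hN.out.map_neg
      eq_zero_of_map_eq_zero' := hN.out.2.2 }

noncomputable instance : NormedSpace ℝ (NormedBy N) where
  norm_smul_le c x := (hN.out.2.1 c x).le

noncomputable def equiv : (Fin d → ℝ) ≃L[ℝ] NormedBy N :=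
  LinearEquiv.toContinuousLinearEquiv (F := NormedBy N) (LinearEquiv.refl ℝ _)

noncomputable def mulVecCLM (M : Matrix (Fin d) (Fin d) ℝ) : NormedBy N →L[ℝ] NormedBy N :=
  LinearMap.toContinuousLinearMap (E := NormedBy N) (F' := NormedBy N) (Matrix.toLin' M)

theorem opNorm_eq_norm_mulVecCLM (M : Matrix (Fin d) (Fin d) ℝ) :
    opNorm N M = ‖(mulVecCLM M : NormedBy N →L[ℝ] NormedBy N)‖ := by
  rw [← ContinuousLinearMap.sSup_unitClosedBall_eq_norm, opNorm]
  congr 1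
  ext r
  simp only [mem_ofPred_eq, mem_image, Metric.mem_closedBall, dist_zero_right]
  exact ⟨fun ⟨x, hx, hr⟩ => ⟨equiv x, hx, hr.symm⟩, fun ⟨x, hx, hr⟩ => ⟨equiv.symm x, hx, hr.symm⟩⟩

end NormedBy

theorem IsNorm.opNorm_nonneg (hN : IsNorm N) (M : Matrix (Fin d) (Fin d) ℝ) :
    0 ≤ opNorm N M := by
  have : Fact (IsNorm N) := ⟨hN⟩
  exact NormedBy.opNorm_eq_norm_mulVecCLM (N := N) M ▸ norm_nonneg _

theorem IsNorm.apply_mulVec_le (hN : IsNorm N) (M : Matrix (Fin d) (Fin d) ℝ) (v : Fin d → ℝ) :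
    N (M *ᵥ v) ≤ opNorm N M * N v := by
  have : Fact (IsNorm N) := ⟨hN⟩
  exact NormedBy.opNorm_eq_norm_mulVecCLM (N := N) M ▸
    (NormedBy.mulVecCLM M).le_opNorm (NormedBy.equiv v)

end

theorem norm_solution_le_general {d : ℕ} (N : (Fin d → ℝ) → ℝ) (hN : IsNorm N)
    (A : Matrix (Fin d) (Fin d) ℝ) (h : ℝ)
    (hA : h ^ 2 * opNorm N (A * A) < 8)
    (x₀ : Fin d → ℝ) (x : ℝ → (Fin d → ℝ))
    (hx : ∀ t : ℝ, x t = (NormedSpace.exp (t • A)).mulVec x₀) :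
    ∀ τ ∈ Set.Icc (0 : ℝ) h,
      N (x τ) ≤ (1 - h ^ 2 / 8 * opNorm N (A * A))⁻¹ * max (N (x 0)) (N (x h)) := by
  have : Fact (IsNorm N) := ⟨hN⟩
  obtain rfl : x = fun t => exp (t • A) *ᵥ x₀ := funext hx
  let B : NormedBy N →L[ℝ] NormedBy N := NormedBy.mulVecCLM A
  let u : ℝ → NormedBy N := fun t => NormedBy.equiv (exp (t • A) *ᵥ x₀)
  have hu (t : ℝ) : HasDerivAt u (B (u t)) t :=
    NormedBy.equiv.hasFDerivAt.comp_hasDerivAt t (hasDerivAt_exp_smul_mulVec A x₀ t)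
  have hBu (t : ℝ) : HasDerivAt (fun t => B (u t)) (B (B (u t))) t :=
    B.hasFDerivAt.comp_hasDerivAt t (hu t)
  have hBBu (t : ℝ) : ‖B (B (u t))‖ ≤ opNorm N (A * A) * ‖u t‖ := by
    show N (A *ᵥ (A *ᵥ (exp (t • A) *ᵥ x₀))) ≤ _
    rw [mulVec_mulVec]
    exact hN.apply_mulVec_le (A * A) _
  intro τ hτ
  have key := norm_le_inv_mul_max_of_norm_deriv2_le_mul hu hBu (hN.opNorm_nonneg _)
    (by rwa [sub_zero]) (fun t _ => hBBu t) hτ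
  rw [sub_zero] at key
  exact key

/-- **Theorem 2.** Let `N` be an arbitrary norm on `ℝ^d`, `A` a `d×d` real matrix and
`h` a real number with `0 < h` and `h²·‖A²‖ < 8`.  If `x t = e^{tA} x₀`, then for every
`τ ∈ [0,h]` one has `N (x τ) ≤ (1 − (h²/8)‖A²‖)⁻¹ · max {N (x 0), N (x h)}`. -/
theorem norm_solution_le {d : ℕ} (N : (Fin d → ℝ) → ℝ) (hN : IsNorm N)
    (A : Matrix (Fin d) (Fin d) ℝ) (h : ℝ) (hh : 0 < h)
    (hA : h ^ 2 * opNorm N (A * A) < 8)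
    (x₀ : Fin d → ℝ) (x : ℝ → (Fin d → ℝ))
    (hx : ∀ t : ℝ, x t = (NormedSpace.exp (t • A)).mulVec x₀) :
    ∀ τ ∈ Set.Icc (0 : ℝ) h,
      N (x τ) ≤ (1 - h ^ 2 / 8 * opNorm N (A * A))⁻¹ * max (N (x 0)) (N (x h)) :=
  norm_solution_le_general N hN A h hA x₀ x hx
end

section
/- Let A₁,…,A_n be d×d real matrices, m > 0, h > 0, α ∈ ℝ and C ≥ 1, and let ‖·‖ be a norm on ℝ^d. Suppose every trajectory x of the switched system for {A₁,…,A_n} with dwell time at least m satisfies ‖x(t)‖ ≤ C e^{α t} ‖x(0)‖ for all t ≥ 0. Then every admissible Markovian product Π of the h-discretization with total time T satisfies ‖Π‖ ≤ C e^{α T} (operator norm induced by ‖·‖); moreover, if Π is cyclic then its spectral radius satisfies ρ(Π) ≤ e^{α T}. -/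
open scoped ENNReal

/-- `x : ℝ → ℝ^d` is a trajectory of the switched system for the matrices `A j` with dwell
time at least `m`: there are switching times `0 = t 0 < t 1 < ⋯` (a finite or infinite
strictly increasing sequence, consecutive gaps at least `m`, tending to `∞` if infinite,
the last interval being `[t N, ∞)` if finite) and modes `j 0, j 1, …` with
`j (k+1) ≠ j k`, such that on each switching interval
`x s = e^{(s − t k) A (j k)} (x (t k))`. -/
def IsDwellTrajectory {d n : ℕ} (A : Fin n → Matrix (Fin d) (Fin d) ℝ) (m : ℝ)
    (x : ℝ → (Fin d → ℝ)) : Prop :=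
  (∃ (N : ℕ) (t : ℕ → ℝ) (j : ℕ → Fin n),
    t 0 = 0 ∧
    (∀ k < N, m ≤ t (k + 1) - t k) ∧
    (∀ k < N, j (k + 1) ≠ j k) ∧
    (∀ k < N, ∀ s ∈ Set.Icc (t k) (t (k + 1)),
      x s = (NormedSpace.exp ((s - t k) • A (j k))).mulVec (x (t k))) ∧
    (∀ s : ℝ, t N ≤ s →
      x s = (NormedSpace.exp ((s - t N) • A (j N))).mulVec (x (t N)))) ∨
  (∃ (t : ℕ → ℝ) (j : ℕ → Fin n),
    t 0 = 0 ∧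
    (∀ k : ℕ, m ≤ t (k + 1) - t k) ∧
    Filter.Tendsto t Filter.atTop Filter.atTop ∧
    (∀ k : ℕ, j (k + 1) ≠ j k) ∧
    (∀ k : ℕ, ∀ s ∈ Set.Icc (t k) (t (k + 1)),
      x s = (NormedSpace.exp ((s - t k) • A (j k))).mulVec (x (t k))))

/-- The admissible Markovian product of the `h`-discretization determined by the modes
`j 1, …, j p` (0-indexed: `j 0, …, j (p-1)`) and the exponents `N 1, …, N p`:
`Π = (e^{hA_{j_p}})^{N_p} e^{mA_{j_p}} ⋯ (e^{hA_{j_1}})^{N_1} e^{mA_{j_1}}`. -/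
noncomputable def markovProd {d n : ℕ} (A : Fin n → Matrix (Fin d) (Fin d) ℝ) (m h : ℝ)
    (j : ℕ → Fin n) (N : ℕ → ℕ) (p : ℕ) : Matrix (Fin d) (Fin d) ℝ :=
  (((List.range p).map fun s =>
    (NormedSpace.exp (h • A (j s))) ^ (N s) * NormedSpace.exp (m • A (j s))).reverse).prod

/-- The total time `T = Σ_{s=1}^p (m + N_s h)` of an admissible Markovian product. -/
noncomputable def markovTime (m h : ℝ) (N : ℕ → ℕ) (p : ℕ) : ℝ :=
  ∑ s ∈ Finset.range p, (m + (N s : ℝ) * h)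

/-!
An admissible Markovian product is the flow of a dwell-time trajectory: its blocks
`(e^{hA_j})^N e^{mA_j} = e^{(m + N h) A_j}` last at least `m` and consecutive modes differ, so
switching at the partial sums of the block lengths gives a trajectory whose value at the total
time `T` is `Π x₀`; hence `‖Π‖ ≤ C e^{αT}`. If `Π` is cyclic, every power `Π^k` is realised the
same way (by repeating the blocks periodically, or by one long run of a single mode when `p = 1`),
so `Nn (Π^k x) ≤ C e^{αkT} Nn x`. Applied to the real and imaginary parts of an eigenvector, this
bounds every eigenvalue by `e^{αT}`.
-/

open scoped Matrix

namespace IsNorm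

variable {d : ℕ} {Nn : (Fin d → ℝ) → ℝ}

lemma map_zero_s4 (hNn : IsNorm Nn) : Nn 0 = 0 := by
  simpa using hNn.2.1 0 0

lemma map_neg_s4 (hNn : IsNorm Nn) (x : Fin d → ℝ) : Nn (-x) = Nn x := by
  simpa using hNn.2.1 (-1) x

lemma nonneg_s4 (hNn : IsNorm Nn) (x : Fin d → ℝ) : 0 ≤ Nn x := by
  have := hNn.1 x (-x)
  rw [add_neg_cancel, hNn.map_zero_s4, hNn.map_neg_s4] at this
  linarith

lemma convexOn (hNn : IsNorm Nn) : ConvexOn ℝ Set.univ Nn := by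
  refine ⟨convex_univ, fun x _ y _ a b ha hb _ => ?_⟩
  calc Nn (a • x + b • y) ≤ Nn (a • x) + Nn (b • y) := hNn.1 _ _
    _ = a • Nn x + b • Nn y := by
      rw [hNn.2.1, hNn.2.1, abs_of_nonneg ha, abs_of_nonneg hb, smul_eq_mul, smul_eq_mul]

lemma continuous (hNn : IsNorm Nn) : Continuous Nn :=
  continuousOn_univ.mp (hNn.convexOn.continuousOn isOpen_univ)

lemma exists_pos_mul_norm_le (hNn : IsNorm Nn) : ∃ ε > 0, ∀ u, ε * ‖u‖ ≤ Nn u := by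
  have hpos : ∀ u ∈ Metric.sphere (0 : Fin d → ℝ) 1, 0 < Nn u := fun u hu =>
    (hNn.nonneg_s4 u).lt_of_ne' fun h0 => by simp [hNn.2.2 u h0] at hu
  obtain ⟨ε, hε, hεle⟩ :=
    (isCompact_sphere 0 1).exists_forall_le' hNn.continuous.continuousOn hpos
  refine ⟨ε, hε, fun u => ?_⟩
  rcases eq_or_ne u 0 with rfl | hu
  · simp [hNn.map_zero_s4]
  have hnu : 0 < ‖u‖ := norm_pos_iff.mpr hu
  have := hεle (‖u‖⁻¹ • u) (by simp [norm_smul, hnu.ne'])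
  rw [hNn.2.1, abs_of_pos (inv_pos.mpr hnu), le_inv_mul_iff₀ hnu] at this
  linarith

lemma opNorm_le (hNn : IsNorm Nn) {M : Matrix (Fin d) (Fin d) ℝ} {K : ℝ} (hK : 0 ≤ K)
    (hM : ∀ x, Nn (M *ᵥ x) ≤ K * Nn x) : opNorm Nn M ≤ K := by
  refine csSup_le ⟨_, 0, by rw [hNn.map_zero_s4]; exact zero_le_one, rfl⟩ ?_
  rintro _ ⟨x, hx, rfl⟩
  exact (hM x).trans (mul_le_of_le_one_right hK hx)

end IsNorm

lemma le_of_forall_pow_le_mul_pow {a b D : ℝ} (hb : 0 < b) (h : ∀ k : ℕ, a ^ k ≤ D * b ^ k) :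
    a ≤ b := by
  by_contra! hba
  obtain ⟨k, hk⟩ := pow_unbounded_of_one_lt D ((one_lt_div hb).mpr hba)
  rw [div_pow, lt_div_iff₀ (pow_pos hb k)] at hk
  exact (h k).not_gt hk

lemma Matrix.exists_mulVec_eq_smul_of_mem_spectrum {ι K : Type*} [Fintype ι] [DecidableEq ι]
    [Field K] {M : Matrix ι ι K} {μ : K} (hμ : μ ∈ spectrum K M) :
    ∃ v ≠ 0, M *ᵥ v = μ • v := by
  rw [← Matrix.spectrum_toLin', ← Module.End.hasEigenvalue_iff_mem_spectrum] at hμ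
  obtain ⟨v, hv, hv0⟩ := hμ.exists_hasEigenvector
  exact ⟨v, hv0, by simpa using Module.End.mem_eigenspace_iff.mp hv⟩

section Complexification

variable {ι : Type*} [Fintype ι] (M : Matrix ι ι ℝ) (v : ι → ℂ) (i : ι)

lemma Matrix.re_map_ofReal_mulVec :
    ((M.map (algebraMap ℝ ℂ) *ᵥ v) i).re = (M *ᵥ fun l => (v l).re) i := by
  simp [Matrix.mulVec, dotProduct, Complex.re_sum]

lemma Matrix.im_map_ofReal_mulVec :
    ((M.map (algebraMap ℝ ℂ) *ᵥ v) i).im = (M *ᵥ fun l => (v l).im) i := by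
  simp [Matrix.mulVec, dotProduct, Complex.im_sum]

end Complexification

lemma Matrix.pow_mulVec_eq_pow_smul {ι K : Type*} [Fintype ι] [DecidableEq ι] [CommRing K]
    {M : Matrix ι ι K} {μ : K} {v : ι → K} (hv : M *ᵥ v = μ • v) (k : ℕ) :
    M ^ k *ᵥ v = μ ^ k • v := by
  induction k with
  | zero => simp
  | succ k ih =>
    rw [pow_succ, ← Matrix.mulVec_mulVec, hv, Matrix.mulVec_smul, ih, smul_smul, pow_succ']

theorem spectralRadius_map_le_of_forall_pow_mulVec_le {d : ℕ} {Nn : (Fin d → ℝ) → ℝ}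
    (hNn : IsNorm Nn) {M : Matrix (Fin d) (Fin d) ℝ} {C R : ℝ} (hR : 0 < R)
    (hpow : ∀ (k : ℕ) (x : Fin d → ℝ), Nn (M ^ k *ᵥ x) ≤ C * R ^ k * Nn x) :
    spectralRadius ℂ (M.map (algebraMap ℝ ℂ)) ≤ ENNReal.ofReal R := by
  refine iSup₂_le fun μ hμ => ?_
  obtain ⟨v, hv0, hv⟩ := Matrix.exists_mulVec_eq_smul_of_mem_spectrum hμ
  obtain ⟨i, hi⟩ := Function.ne_iff.mp hv0
  obtain ⟨ε, hε, hεNn⟩ := hNn.exists_pos_mul_norm_le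
  have hcoord : ∀ (k : ℕ) (u : Fin d → ℝ), |(M ^ k *ᵥ u) i| ≤ ε⁻¹ * (C * R ^ k * Nn u) :=
    fun k u => calc
      |(M ^ k *ᵥ u) i| ≤ ‖M ^ k *ᵥ u‖ := norm_le_pi_norm (M ^ k *ᵥ u) i
      _ ≤ ε⁻¹ * Nn (M ^ k *ᵥ u) := (le_inv_mul_iff₀ hε).mpr (hεNn _)
      _ ≤ ε⁻¹ * (C * R ^ k * Nn u) := by gcongr; exact hpow k u
  set a : Fin d → ℝ := fun l => (v l).re
  set b : Fin d → ℝ := fun l => (v l).im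
  have hvi : 0 < ‖v i‖ := norm_pos_iff.mpr hi
  have hμR : ‖μ‖ ≤ R := by
    refine le_of_forall_pow_le_mul_pow (D := ε⁻¹ * C * (Nn a + Nn b) / ‖v i‖) hR fun k => ?_
    have hvk : μ ^ k * v i = ((M ^ k).map (algebraMap ℝ ℂ) *ᵥ v) i := by
      rw [Matrix.map_pow, Matrix.pow_mulVec_eq_pow_smul hv, Pi.smul_apply, smul_eq_mul]
    have := calc ‖μ‖ ^ k * ‖v i‖ = ‖μ ^ k * v i‖ := by rw [norm_mul, norm_pow]
      _ ≤ |(μ ^ k * v i).re| + |(μ ^ k * v i).im| := Complex.norm_le_abs_re_add_abs_im _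
      _ = |(M ^ k *ᵥ a) i| + |(M ^ k *ᵥ b) i| := by
        rw [hvk, Matrix.re_map_ofReal_mulVec, Matrix.im_map_ofReal_mulVec]
      _ ≤ ε⁻¹ * (C * R ^ k * Nn a) + ε⁻¹ * (C * R ^ k * Nn b) :=
        add_le_add (hcoord k a) (hcoord k b)
    rw [div_mul_eq_mul_div, le_div_iff₀ hvi]
    linarith
  exact (ofReal_norm μ).symm.trans_le (ENNReal.ofReal_le_ofReal hμR)

section SwitchedTrajectory

variable {d n : ℕ} (A : Fin n → Matrix (Fin d) (Fin d) ℝ) (t : ℕ → ℝ) (j : ℕ → Fin n) (q : ℕ)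

/-- The states at the switching times `t 0, t 1, …` of the switched system started at `x₀`,
running mode `j k` on `[t k, t (k + 1)]`. -/
noncomputable def switchState (x₀ : Fin d → ℝ) : ℕ → Fin d → ℝ
  | 0 => x₀
  | k + 1 => NormedSpace.exp ((t (k + 1) - t k) • A (j k)) *ᵥ switchState x₀ k

noncomputable def switchIndex (s : ℝ) : ℕ := Nat.findGreatest (fun k => t k ≤ s) q

/-- The switched trajectory with switching times `t 1 < ⋯ < t q`, running mode `j q` forever
after `t q`. -/
noncomputable def switchedTrajectory (x₀ : Fin d → ℝ) (s : ℝ) : Fin d → ℝ :=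
  NormedSpace.exp ((s - t (switchIndex t q s)) • A (j (switchIndex t q s))) *ᵥ
    switchState A t j x₀ (switchIndex t q s)

variable {A t j q}

lemma switchIndex_eq (ht : StrictMono t) {k : ℕ} {s : ℝ} (hkq : k ≤ q) (hks : t k ≤ s)
    (hsk : k < q → s < t (k + 1)) : switchIndex t q s = k := by
  refine Nat.findGreatest_eq_iff.mpr ⟨hkq, fun _ => hks, fun l hkl hlq hls => ?_⟩
  exact (hsk (hkl.trans_le hlq)).not_ge (hls.trans' (ht.monotone hkl))

lemma switchedTrajectory_eq (ht : StrictMono t) (x₀ : Fin d → ℝ) {k : ℕ} {s : ℝ} (hkq : k ≤ q)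
    (hks : t k ≤ s) (hsk : k < q → s < t (k + 1)) :
    switchedTrajectory A t j q x₀ s =
      NormedSpace.exp ((s - t k) • A (j k)) *ᵥ switchState A t j x₀ k := by
  rw [switchedTrajectory, switchIndex_eq ht hkq hks hsk]

lemma switchedTrajectory_switchTime (ht : StrictMono t) (x₀ : Fin d → ℝ) {k : ℕ}
    (hk : k ≤ q + 1) : switchedTrajectory A t j q x₀ (t k) = switchState A t j x₀ k := by
  rcases hk.lt_or_eq with hk | rfl
  · rw [switchedTrajectory_eq ht x₀ (Nat.lt_succ_iff.mp hk) le_rfl fun _ => ht k.lt_succ_self,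
      sub_self, zero_smul, NormedSpace.exp_zero, Matrix.one_mulVec]
  · exact switchedTrajectory_eq ht x₀ le_rfl (ht.monotone q.le_succ) fun h => absurd h q.lt_irrefl

lemma isDwellTrajectory_switchedTrajectory (ht : StrictMono t) (ht0 : t 0 = 0) {m : ℝ}
    (hgap : ∀ k < q, m ≤ t (k + 1) - t k) (hj : ∀ k < q, j (k + 1) ≠ j k) (x₀ : Fin d → ℝ) :
    IsDwellTrajectory A m (switchedTrajectory A t j q x₀) := by
  refine Or.inl ⟨q, t, j, ht0, hgap, hj, fun k hk s hs => ?_, fun s hs => ?_⟩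
  · rw [switchedTrajectory_switchTime ht x₀ (by omega)]
    rcases hs.2.lt_or_eq with hs' | rfl
    · exact switchedTrajectory_eq ht x₀ hk.le hs.1 fun _ => hs'
    · exact switchedTrajectory_switchTime ht x₀ (by omega)
  · rw [switchedTrajectory_switchTime ht x₀ q.le_succ]
    exact switchedTrajectory_eq ht x₀ le_rfl hs fun h => absurd h q.lt_irrefl

end SwitchedTrajectory

lemma Matrix.exp_add_natCast_mul_smul {ι : Type*} [Fintype ι] [DecidableEq ι]
    (B : Matrix ι ι ℝ) (m h : ℝ) (N : ℕ) :
    NormedSpace.exp ((m + N * h) • B) = NormedSpace.exp (h • B) ^ N * NormedSpace.exp (m • B) := by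
  have hcomm : Commute ((N * h) • B) (m • B) := ((Commute.refl B).smul_left _).smul_right _
  rw [add_comm, add_smul, Matrix.exp_add_of_commute _ _ hcomm, mul_smul, Nat.cast_smul_eq_nsmul,
    Matrix.exp_nsmul]

section Markov

variable {d n : ℕ} (A : Fin n → Matrix (Fin d) (Fin d) ℝ) (m h : ℝ) (j : ℕ → Fin n) (N : ℕ → ℕ)

@[simp]
lemma markovProd_zero : markovProd A m h j N 0 = 1 := by
  simp [markovProd]

lemma markovProd_succ (k : ℕ) :
    markovProd A m h j N (k + 1) =
      NormedSpace.exp (h • A (j k)) ^ N k * NormedSpace.exp (m • A (j k)) *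
        markovProd A m h j N k := by
  simp [markovProd, List.range_succ]

lemma markovProd_add (a b : ℕ) :
    markovProd A m h j N (a + b) =
      markovProd A m h (fun s => j (a + s)) (fun s => N (a + s)) b * markovProd A m h j N a := by
  simp [markovProd, List.range_add, List.map_map, Function.comp_def]

lemma markovProd_congr {j' : ℕ → Fin n} {N' : ℕ → ℕ} {p : ℕ} (hj : ∀ s < p, j s = j' s)
    (hN : ∀ s < p, N s = N' s) : markovProd A m h j N p = markovProd A m h j' N' p := by
  unfold markovProd
  congr 2
  refine List.map_congr_left fun s hs => ?_
  rw [List.mem_range] at hs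
  rw [hj s hs, hN s hs]

lemma markovProd_mod_mul (p k : ℕ) :
    markovProd A m h (fun s => j (s % p)) (fun s => N (s % p)) (k * p) =
      markovProd A m h j N p ^ k := by
  induction k with
  | zero => simp
  | succ k ih =>
    rw [add_mul, one_mul, markovProd_add, ih, pow_succ']
    congr 1
    exact markovProd_congr A m h _ _ (fun s hs => by rw [Nat.mul_add_mod_of_lt hs])
      fun s hs => by rw [Nat.mul_add_mod_of_lt hs]

variable {m h}

lemma markovTime_succ (k : ℕ) : markovTime m h N (k + 1) = markovTime m h N k + (m + N k * h) :=
  Finset.sum_range_succ _ _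

lemma markovTime_mod_mul (p k : ℕ) :
    markovTime m h (fun s => N (s % p)) (k * p) = k * markovTime m h N p := by
  induction k with
  | zero => simp [markovTime]
  | succ k ih =>
    rw [add_mul, one_mul, markovTime, Finset.sum_range_add, ← markovTime, ih]
    have : ∑ s ∈ Finset.range p, (m + (N ((k * p + s) % p) : ℝ) * h) = markovTime m h N p :=
      Finset.sum_congr rfl fun s hs => by rw [Nat.mul_add_mod_of_lt (Finset.mem_range.mp hs)]
    rw [this]
    push_cast
    ring

lemma markovTime_strictMono (hm : 0 < m) (hh : 0 ≤ h) : StrictMono (markovTime m h N) :=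
  strictMono_nat_of_lt_succ fun k => by
    rw [markovTime_succ]
    have : 0 ≤ (N k : ℝ) * h := by positivity
    linarith

lemma switchState_markovTime (x₀ : Fin d → ℝ) (k : ℕ) :
    switchState A (markovTime m h N) j x₀ k = markovProd A m h j N k *ᵥ x₀ := by
  induction k with
  | zero => simp [switchState]
  | succ k ih =>
    rw [switchState, ih, markovTime_succ, add_sub_cancel_left, Matrix.exp_add_natCast_mul_smul,
      Matrix.mulVec_mulVec, markovProd_succ]

end Markov

lemma apply_add_one_mod_ne {α : Type*} {j : ℕ → α} {p : ℕ}
    (hj : ∀ s, s + 1 < p → j (s + 1) ≠ j s) (hcyc : j (p - 1) ≠ j 0) (s : ℕ) :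
    j ((s + 1) % p) ≠ j (s % p) := by
  have hp : 2 ≤ p := by
    by_contra!
    interval_cases p <;> simp at hcyc
  have hr : s % p < p := Nat.mod_lt _ (by omega)
  rw [Nat.add_mod_eq_ite, Nat.mod_eq_of_lt (by omega : 1 < p)]
  split_ifs with h
  · rw [show s % p + 1 - p = 0 by omega, show s % p = p - 1 by omega]
    exact hcyc.symm
  · exact hj _ (by omega)

def DwellTrajectoriesExpBounded {d n : ℕ} (A : Fin n → Matrix (Fin d) (Fin d) ℝ) (m α C : ℝ)
    (Nn : (Fin d → ℝ) → ℝ) : Prop :=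
  ∀ x : ℝ → (Fin d → ℝ), IsDwellTrajectory A m x →
    ∀ s : ℝ, 0 ≤ s → Nn (x s) ≤ C * Real.exp (α * s) * Nn (x 0)

lemma isDwellTrajectory_exp_smul_mulVec {d n : ℕ} (A : Fin n → Matrix (Fin d) (Fin d) ℝ) (m : ℝ)
    (i : Fin n) (x₀ : Fin d → ℝ) :
    IsDwellTrajectory A m fun s => NormedSpace.exp (s • A i) *ᵥ x₀ :=
  Or.inl ⟨0, fun _ => 0, fun _ => i, rfl, by simp, by simp, by simp, fun s _ => by simp⟩

namespace DwellTrajectoriesExpBounded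

variable {d n : ℕ} {A : Fin n → Matrix (Fin d) (Fin d) ℝ} {m α C : ℝ}
  {Nn : (Fin d → ℝ) → ℝ}

lemma exp_smul_mulVec_le (hbound : DwellTrajectoriesExpBounded A m α C Nn) (i : Fin n) {s : ℝ}
    (hs : 0 ≤ s) (x₀ : Fin d → ℝ) :
    Nn (NormedSpace.exp (s • A i) *ᵥ x₀) ≤ C * Real.exp (α * s) * Nn x₀ := by
  simpa using hbound _ (isDwellTrajectory_exp_smul_mulVec A m i x₀) s hs

lemma switchState_le (hbound : DwellTrajectoriesExpBounded A m α C Nn) {t : ℕ → ℝ}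
    {j : ℕ → Fin n} {q : ℕ} (ht : StrictMono t) (ht0 : t 0 = 0)
    (hgap : ∀ k < q, m ≤ t (k + 1) - t k) (hj : ∀ k < q, j (k + 1) ≠ j k) (x₀ : Fin d → ℝ) :
    Nn (switchState A t j x₀ (q + 1)) ≤ C * Real.exp (α * t (q + 1)) * Nn x₀ := by
  have hx₀ : switchedTrajectory A t j q x₀ 0 = x₀ := by
    simpa [ht0, switchState] using
      switchedTrajectory_switchTime (j := j) ht x₀ (Nat.zero_le (q + 1))
  have := hbound _ (isDwellTrajectory_switchedTrajectory ht ht0 hgap hj x₀) (t (q + 1))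
    (ht0 ▸ ht.monotone (Nat.zero_le _))
  rwa [switchedTrajectory_switchTime ht x₀ le_rfl, hx₀] at this

lemma markovProd_mulVec_le (hbound : DwellTrajectoriesExpBounded A m α C Nn) {h : ℝ}
    (hm : 0 < m) (hh : 0 ≤ h) {p : ℕ} (hp : 0 < p) {j : ℕ → Fin n} (N : ℕ → ℕ)
    (hj : ∀ s, s + 1 < p → j (s + 1) ≠ j s) (x : Fin d → ℝ) :
    Nn (markovProd A m h j N p *ᵥ x) ≤ C * Real.exp (α * markovTime m h N p) * Nn x := by
  obtain ⟨q, rfl⟩ := Nat.exists_eq_add_one_of_ne_zero hp.ne'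
  rw [← switchState_markovTime]
  refine hbound.switchState_le (markovTime_strictMono N hm hh) (by simp [markovTime])
    (fun k _ => ?_) (fun k hk => hj k (by omega)) x
  rw [markovTime_succ, add_sub_cancel_left]
  have : 0 ≤ (N k : ℝ) * h := by positivity
  linarith

lemma markovProd_pow_mulVec_le (hbound : DwellTrajectoriesExpBounded A m α C Nn) {h : ℝ}
    (hm : 0 < m) (hh : 0 ≤ h) (hC : 1 ≤ C) (hNn : IsNorm Nn) {p : ℕ} (hp : 0 < p)
    {j : ℕ → Fin n} (N : ℕ → ℕ) (hj : ∀ s, s + 1 < p → j (s + 1) ≠ j s)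
    (hcyc : p = 1 ∨ j (p - 1) ≠ j 0) (k : ℕ) (x : Fin d → ℝ) :
    Nn (markovProd A m h j N p ^ k *ᵥ x) ≤
      C * Real.exp (α * markovTime m h N p) ^ k * Nn x := by
  rcases k.eq_zero_or_pos with rfl | hk
  · simpa using le_mul_of_one_le_left (hNn.nonneg_s4 x) hC
  rw [← Real.exp_nat_mul, mul_left_comm]
  rcases hcyc with rfl | hcyc
  · have hT : markovTime m h N 1 = m + N 0 * h := by simp [markovTime]
    have hpow : markovProd A m h j N 1 ^ k =
        NormedSpace.exp ((k * markovTime m h N 1) • A (j 0)) := by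
      rw [markovProd_succ, markovProd_zero, mul_one, ← Matrix.exp_add_natCast_mul_smul,
        ← Matrix.exp_nsmul, ← Nat.cast_smul_eq_nsmul ℝ, smul_smul, hT]
    rw [hpow, hT]
    exact hbound.exp_smul_mulVec_le (j 0) (by positivity) x
  · have := hbound.markovProd_mulVec_le hm hh (Nat.mul_pos hk hp) (j := fun s => j (s % p))
      (fun s => N (s % p)) (fun s _ => apply_add_one_mod_ne hj hcyc s) x
    rwa [markovProd_mod_mul, markovTime_mod_mul] at this

end DwellTrajectoriesExpBounded

/-- **Lower bound half of the main theorem.**  If every trajectory of the switched system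
with dwell time at least `m` satisfies `Nn (x t) ≤ C·e^{α t}·Nn (x 0)` for all `t ≥ 0`
(`Nn` a norm on `ℝ^d`, `C ≥ 1`), then every admissible Markovian product `Π` of the
`h`-discretization with total time `T` satisfies `‖Π‖ ≤ C·e^{α T}` in the operator norm
induced by `Nn`; moreover if `Π` is cyclic then `ρ(Π) ≤ e^{α T}`. -/
theorem markov_products_bounded_of_trajectories_bounded {d n : ℕ}
    (A : Fin n → Matrix (Fin d) (Fin d) ℝ) (m h α C : ℝ)
    (hm : 0 < m) (hh : 0 < h) (hC : 1 ≤ C)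
    (Nn : (Fin d → ℝ) → ℝ) (hNn : IsNorm Nn)
    (hbound : ∀ x : ℝ → (Fin d → ℝ), IsDwellTrajectory A m x →
      ∀ s : ℝ, 0 ≤ s → Nn (x s) ≤ C * Real.exp (α * s) * Nn (x 0)) :
    ∀ (p : ℕ), 0 < p → ∀ (j : ℕ → Fin n) (N : ℕ → ℕ),
      (∀ s : ℕ, s + 1 < p → j (s + 1) ≠ j s) →
      opNorm Nn (markovProd A m h j N p) ≤ C * Real.exp (α * markovTime m h N p) ∧
      ((p = 1 ∨ j (p - 1) ≠ j 0) →
        spectralRadius ℂ ((markovProd A m h j N p).map (algebraMap ℝ ℂ)) ≤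
          ENNReal.ofReal (Real.exp (α * markovTime m h N p))) := by
  intro p hp j N hj
  have hbound' : DwellTrajectoriesExpBounded A m α C Nn := hbound
  refine ⟨hNn.opNorm_le (mul_nonneg (by linarith) (Real.exp_pos _).le)
    (hbound'.markovProd_mulVec_le hm hh.le hp N hj), fun hcyc => ?_⟩
  exact spectralRadius_map_le_of_forall_pow_mulVec_le hNn (Real.exp_pos _)
    (hbound'.markovProd_pow_mulVec_le hm hh.le hC hNn hp N hj hcyc)
end
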